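/- arXiv:1606.04690 — 4 statements merged into one kernel-verified Lean document; each statement's English description precedes it below -/
import Mathlib

section
/- Let α ≥ 1 and β ≥ (1+√5)/2 be real numbers and let m be a nonnegative integer. Then for every z in the open unit disk 𝔻 with z ≠ 0, Re( 𝔼_{α,β}(z) / (𝔼_{α,β})_m(z) ) ≥ (β² − β − 1)/β². -/
/-!
Write `A n = Γ(β)/Γ(α(n+1)+β)` for the coefficient of `z^(n+2)`. Since `α ≥ 1`, monotonicity of `Γ`
and `Γ(β+n+1) ≥ β(β+1)ⁿΓ(β)` give `A n ≤ β⁻¹(β+1)⁻ⁿ`, so `∑ A n ≤ τ := (β+1)/β²`, and `τ ≤ 1` because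
`β` is at least the golden ratio. For `r = ‖z‖ ≤ 1` the real sums `P = ∑_{n<m} A n r^(n+2)` and
`T = ∑_{n≥m} A n r^(n+2)` satisfy `P + T ≤ τ r`, hence `T ≤ τ (r - P)`. The tail `R` of the series has
`‖R‖ ≤ T`, while `‖(𝔼_{α,β})_m(z)‖ ≥ r - P > 0`. So `𝔼_{α,β}/(𝔼_{α,β})_m = 1 + R/(𝔼_{α,β})_m` with
`‖R/(𝔼_{α,β})_m‖ ≤ τ`, and its real part is at least `1 - τ = (β² - β - 1)/β²`.
-/

/-- The normalized Mittag-Leffler function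
`𝔼_{α,β}(z) = z + ∑_{n=1}^∞ (Γ(β)/Γ(αn+β)) z^{n+1}`. -/
noncomputable def normalizedMittagLeffler (α β : ℝ) (z : ℂ) : ℂ :=
  z + ∑' n : ℕ, ((Real.Gamma β / Real.Gamma (α * (n + 1) + β) : ℝ) : ℂ) * z ^ (n + 2)

/-- The `m`-th partial sum `(𝔼_{α,β})_m(z) = z + ∑_{n=1}^m (Γ(β)/Γ(αn+β)) z^{n+1}`. -/
noncomputable def normalizedMittagLefflerPartial (α β : ℝ) (m : ℕ) (z : ℂ) : ℂ :=
  z + ∑ n ∈ Finset.Icc 1 m, ((Real.Gamma β / Real.Gamma (α * n + β) : ℝ) : ℂ) * z ^ (n + 1)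

open Finset

lemma mul_add_one_pow_mul_Gamma_le {β : ℝ} (hβ : 0 < β) (n : ℕ) :
    β * (β + 1) ^ n * Real.Gamma β ≤ Real.Gamma (β + (n + 1)) := by
  induction n with
  | zero => simp [Real.Gamma_add_one hβ.ne']
  | succ n ih =>
    have hpos : 0 < β + (n + 1) := by positivity
    rw [Nat.cast_succ, show β + ((n : ℝ) + 1 + 1) = β + (n + 1) + 1 by ring,
      Real.Gamma_add_one hpos.ne']
    calc β * (β + 1) ^ (n + 1) * Real.Gamma β = (β + 1) * (β * (β + 1) ^ n * Real.Gamma β) := by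
          ring
      _ ≤ (β + (n + 1)) * Real.Gamma (β + (n + 1)) := by
          gcongr
          linarith [n.cast_nonneg (α := ℝ)]

lemma Gamma_div_Gamma_mul_add_le {α β : ℝ} (hα : 1 ≤ α) (hβ : 1 ≤ β) (n : ℕ) :
    Real.Gamma β / Real.Gamma (α * (n + 1) + β) ≤ β⁻¹ * (β + 1)⁻¹ ^ n := by
  have hβ0 : 0 < β := by linarith
  have hn : (0 : ℝ) ≤ n := n.cast_nonneg
  have hαn : (n : ℝ) + 1 ≤ α * (n + 1) := by nlinarith
  have hmono : Real.Gamma (β + (n + 1)) ≤ Real.Gamma (α * (n + 1) + β) :=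
    Real.Gamma_strictMonoOn_Ici.monotoneOn (Set.mem_Ici.mpr (by linarith))
      (Set.mem_Ici.mpr (by linarith)) (by linarith)
  rw [div_le_iff₀ (Real.Gamma_pos_of_pos (by positivity))]
  calc Real.Gamma β = β⁻¹ * (β + 1)⁻¹ ^ n * (β * (β + 1) ^ n * Real.Gamma β) := by
        rw [inv_pow]
        field_simp
    _ ≤ β⁻¹ * (β + 1)⁻¹ ^ n * Real.Gamma (β + (n + 1)) := by
        gcongr
        exact mul_add_one_pow_mul_Gamma_le hβ0 n
    _ ≤ β⁻¹ * (β + 1)⁻¹ ^ n * Real.Gamma (α * (n + 1) + β) := by gcongr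

lemma hasSum_inv_mul_inv_add_one_pow {β : ℝ} (hβ : 0 < β) :
    HasSum (fun n : ℕ ↦ β⁻¹ * (β + 1)⁻¹ ^ n) ((β + 1) / β ^ 2) := by
  have h := (hasSum_geometric_of_lt_one (r := (β + 1)⁻¹) (by positivity)
    (inv_lt_one_of_one_lt₀ (by linarith))).mul_left β⁻¹
  rwa [show 1 - (β + 1)⁻¹ = β / (β + 1) by field_simp; ring, inv_div,
    show β⁻¹ * ((β + 1) / β) = (β + 1) / β ^ 2 by field_simp] at h

lemma tsum_nat_add_le_mul_sub_sum {c : ℕ → ℝ} {τ r : ℝ} (hc0 : ∀ n, 0 ≤ c n) (hc : Summable c)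
    (hcτ : ∑' n, c n ≤ τ * r) (hτ : τ ≤ 1) (m : ℕ) :
    ∑' n, c (n + m) ≤ τ * (r - ∑ n ∈ range m, c n) := by
  have hsplit := hc.sum_add_tsum_nat_add m
  have hP : 0 ≤ ∑ n ∈ range m, c n := sum_nonneg fun n _ ↦ hc0 n
  nlinarith

lemma one_sub_le_re_add_div_self {u w : ℂ} {τ : ℝ} (hu : u ≠ 0) (hw : ‖w‖ ≤ τ * ‖u‖) :
    1 - τ ≤ ((u + w) / u).re := by
  have hwu : ‖w / u‖ ≤ τ := by
    rwa [norm_div, div_le_iff₀ (norm_pos_iff.mpr hu)]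
  rw [add_div, div_self hu, Complex.add_re, Complex.one_re]
  linarith [(abs_le.mp (Complex.abs_re_le_norm (w / u))).1]

theorem one_sub_le_re_tsum_div_partial {a : ℕ → ℝ} {τ : ℝ} {z : ℂ} (ha0 : ∀ n, 0 < a n) (ha : Summable a)
    (haτ : ∑' n, a n ≤ τ) (hτ : τ ≤ 1) (hz : ‖z‖ ≤ 1) (hz0 : z ≠ 0) (m : ℕ) :
    1 - τ ≤ ((z + ∑' n, (a n : ℂ) * z ^ (n + 2)) /
      (z + ∑ n ∈ range m, (a n : ℂ) * z ^ (n + 2))).re := by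
  set r := ‖z‖
  set c : ℕ → ℝ := fun n ↦ a n * r ^ (n + 2)
  have hr0 : 0 < r := norm_pos_iff.mpr hz0
  have hτ0 : 0 ≤ τ := (tsum_nonneg fun n ↦ (ha0 n).le).trans haτ
  have hc0 : ∀ n, 0 < c n := fun n ↦ mul_pos (ha0 n) (by positivity)
  have hc_le : ∀ n, c n ≤ a n * r := fun n ↦
    mul_le_mul_of_nonneg_left (pow_le_of_le_one hr0.le hz (by omega)) (ha0 n).le
  have hc : Summable c := (ha.mul_right r).of_nonneg_of_le (fun n ↦ (hc0 n).le) hc_le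
  have hcτ : ∑' n, c n ≤ τ * r :=
    calc ∑' n, c n ≤ ∑' n, a n * r := hc.tsum_le_tsum hc_le (ha.mul_right r)
      _ = (∑' n, a n) * r := tsum_mul_right
      _ ≤ τ * r := by gcongr
  have hnorm : ∀ n, ‖(a n : ℂ) * z ^ (n + 2)‖ = c n := fun n ↦ by
    simp [c, r, abs_of_pos (ha0 n)]
  have hw : Summable fun n ↦ (a n : ℂ) * z ^ (n + 2) := .of_norm (by simpa only [hnorm] using hc)
  set P := ∑ n ∈ range m, c n
  set T := ∑' n, c (n + m)
  have hT : T ≤ τ * (r - P) := tsum_nat_add_le_mul_sub_sum (fun n ↦ (hc0 n).le) hc hcτ hτ m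
  have hT0 : 0 < T := ((summable_nat_add_iff m).mpr hc).tsum_pos (fun n ↦ (hc0 _).le) 0 (hc0 _)
  have hPr : 0 < r - P := pos_of_mul_pos_right (hT0.trans_le hT) hτ0
  have hpartial : r - P ≤ ‖z + ∑ n ∈ range m, (a n : ℂ) * z ^ (n + 2)‖ := by
    have hsum : ‖∑ n ∈ range m, (a n : ℂ) * z ^ (n + 2)‖ ≤ P :=
      (norm_sum_le _ _).trans_eq (sum_congr rfl fun n _ ↦ hnorm n)
    linarith [norm_sub_le_norm_add z (∑ n ∈ range m, (a n : ℂ) * z ^ (n + 2))]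
  have htail : ‖∑' n, (a (n + m) : ℂ) * z ^ (n + m + 2)‖ ≤ T := by
    have hsum : Summable fun n ↦ ‖(a (n + m) : ℂ) * z ^ (n + m + 2)‖ := by
      simpa only [hnorm] using (summable_nat_add_iff m).mpr hc
    exact (norm_tsum_le_tsum_norm hsum).trans_eq (tsum_congr fun n ↦ hnorm (n + m))
  rw [← hw.sum_add_tsum_nat_add m, ← add_assoc]
  exact one_sub_le_re_add_div_self (norm_pos_iff.mp (by linarith))
    (htail.trans (hT.trans (mul_le_mul_of_nonneg_left hpartial hτ0)))

lemma normalizedMittagLefflerPartial_eq (α β : ℝ) (m : ℕ) (z : ℂ) :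
    normalizedMittagLefflerPartial α β m z = z + ∑ n ∈ range m,
      ((Real.Gamma β / Real.Gamma (α * (n + 1) + β) : ℝ) : ℂ) * z ^ (n + 2) := by
  rw [normalizedMittagLefflerPartial, ← Ico_add_one_right_eq_Icc, sum_Ico_eq_sum_range,
    Nat.add_sub_cancel]
  refine congrArg (z + ·) (sum_congr rfl fun n _ ↦ ?_)
  push_cast
  ring_nf

theorem re_mittagLeffler_div_partial_ge (α β : ℝ) (hα : 1 ≤ α)
    (hβ : (1 + Real.sqrt 5) / 2 ≤ β) (m : ℕ) (z : ℂ) (hz : ‖z‖ < 1) (hz0 : z ≠ 0) :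
    (β ^ 2 - β - 1) / β ^ 2 ≤
      (normalizedMittagLeffler α β z / normalizedMittagLefflerPartial α β m z).re := by
  have hsqrt5 : 2 ≤ Real.sqrt 5 := Real.le_sqrt_of_sq_le (by norm_num)
  have hβ1 : 1 ≤ β := by linarith
  have hβ0 : 0 < β := by linarith
  have hgolden : β + 1 ≤ β ^ 2 := by
    nlinarith [Real.sq_sqrt (show (0 : ℝ) ≤ 5 by norm_num)]
  set A : ℕ → ℝ := fun n ↦ Real.Gamma β / Real.Gamma (α * (n + 1) + β)
  have hA0 : ∀ n, 0 < A n := fun n ↦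
    div_pos (Real.Gamma_pos_of_pos hβ0) (Real.Gamma_pos_of_pos (by positivity))
  have hb := hasSum_inv_mul_inv_add_one_pow hβ0
  have hAb : ∀ n, A n ≤ β⁻¹ * (β + 1)⁻¹ ^ n := Gamma_div_Gamma_mul_add_le hα hβ1
  have hA : Summable A := hb.summable.of_nonneg_of_le (fun n ↦ (hA0 n).le) hAb
  have hAτ : ∑' n, A n ≤ (β + 1) / β ^ 2 := hb.tsum_eq ▸ hA.tsum_le_tsum hAb hb.summable
  have hτ : (β + 1) / β ^ 2 ≤ 1 := (div_le_one (by positivity)).mpr hgolden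
  rw [normalizedMittagLefflerPartial_eq]
  calc (β ^ 2 - β - 1) / β ^ 2 = 1 - (β + 1) / β ^ 2 := by field_simp; ring
    _ ≤ _ := one_sub_le_re_tsum_div_partial hA0 hA hAτ hτ hz.le hz0 m
end

section
/- For every z in the open unit disk 𝔻 with z ≠ 0, Re( z / (cosh(√z) − 1) ) ≥ 18/13, where √z denotes the principal square root of z. -/
/-!
Write `s = √z`, so `z / (cosh s - 1) = w⁻¹` with `w = (cosh s - 1) / s² = 1/2 + s²/4! + ⋯`.
The degree-four Taylor bound for `exp` at `±s` gives `‖w - 1/2‖ ≤ 5/96`, and inversion maps the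
disk `‖w - 1/2‖ ≤ r` into the half-plane `Re ≥ 1/(1/2 + r)`; here `1/(1/2 + 5/96) = 96/53 > 18/13`.
-/

open Complex Finset

namespace Complex

theorem one_div_add_le_re_inv_of_norm_sub_le {w : ℂ} {c r : ℝ} (hrc : r < c)
    (hw : ‖w - c‖ ≤ r) : 1 / (c + r) ≤ (w⁻¹).re := by
  have hre : |w.re - c| ≤ r := by simpa using (abs_re_le_norm (w - c)).trans hw
  have hsq : (w.re - c) ^ 2 + w.im ^ 2 ≤ r ^ 2 := by
    have h := pow_le_pow_left₀ (norm_nonneg _) hw 2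
    rwa [← normSq_eq_norm_sq, normSq_apply, sub_re, sub_im, ofReal_re, ofReal_im, sub_zero,
      ← sq, ← sq] at h
  obtain ⟨hre_lo, hre_hi⟩ := abs_le.mp hre
  have hpos : 0 < normSq w := by rw [normSq_apply]; nlinarith
  rw [inv_re, div_le_div_iff₀ (by linarith) hpos, normSq_apply]
  -- `‖w‖² ≤ 2c Re w - (c² - r²) ≤ (c + r) Re w`, the last step because `Re w ≤ c + r`
  nlinarith

theorem norm_cosh_sub_one_sub_sq_div_two_le {s : ℂ} (hs : ‖s‖ ≤ 1) :
    ‖cosh s - 1 - s ^ 2 / 2‖ ≤ 5 / 96 * ‖s‖ ^ 4 := by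
  have hexp := exp_bound hs (n := 4) (by norm_num)
  have hexp_neg := exp_bound (x := -s) (by rwa [norm_neg]) (n := 4) (by norm_num)
  simp only [sum_range_succ, sum_range_zero, norm_neg, Nat.factorial] at hexp hexp_neg
  norm_num at hexp hexp_neg
  have hsplit : cosh s - 1 - s ^ 2 / 2 = ((exp s - (1 + s + s ^ 2 / 2 + s ^ 3 / 6))
      + (exp (-s) - (1 + -s + s ^ 2 / 2 + (-s) ^ 3 / 6))) / 2 := by
    rw [cosh]; ring
  rw [hsplit, norm_div, RCLike.norm_ofNat, div_le_iff₀ two_pos]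
  exact (norm_add_le _ _).trans (by linarith)

theorem norm_cosh_sub_one_div_sq_sub_half_le {s : ℂ} (hs0 : s ≠ 0) (hs : ‖s‖ ≤ 1) :
    ‖(cosh s - 1) / s ^ 2 - 1 / 2‖ ≤ 5 / 96 * ‖s‖ ^ 2 := by
  have hsq : 0 < ‖s‖ ^ 2 := by positivity
  rw [← mul_div_cancel_right₀ (1 / 2 : ℂ) (pow_ne_zero 2 hs0), ← sub_div, norm_div, norm_pow,
    div_le_iff₀ hsq]
  calc ‖cosh s - 1 - 1 / 2 * s ^ 2‖ = ‖cosh s - 1 - s ^ 2 / 2‖ := by ring_nf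
    _ ≤ 5 / 96 * ‖s‖ ^ 4 := norm_cosh_sub_one_sub_sq_div_two_le hs
    _ = 5 / 96 * ‖s‖ ^ 2 * ‖s‖ ^ 2 := by ring

end Complex

theorem re_div_cosh_sqrt_sub_one_ge (z : ℂ) (hz : ‖z‖ < 1) (hz0 : z ≠ 0) :
    (18 / 13 : ℝ) ≤ (z / (Complex.cosh (z ^ (1 / 2 : ℂ)) - 1)).re := by
  set s := z ^ (1 / 2 : ℂ)
  have hsz : s ^ 2 = z := by rw [show s = z ^ (2⁻¹ : ℂ) by simp [s]]; exact cpow_ofNat_inv_pow z 2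
  have hs0 : s ≠ 0 := by rintro hs; simp [← hsz, hs] at hz0
  have hs1 : ‖s‖ ≤ 1 := by
    rw [← sq_le_one_iff₀ (norm_nonneg s), ← norm_pow, hsz]; exact hz.le
  have hw : ‖(cosh s - 1) / s ^ 2 - (1 / 2 : ℝ)‖ ≤ 5 / 96 := by
    push_cast
    refine (norm_cosh_sub_one_div_sq_sub_half_le hs0 hs1).trans ?_
    nlinarith [pow_le_one₀ (norm_nonneg s) hs1 (n := 2)]
  calc (18 / 13 : ℝ) ≤ 1 / (1 / 2 + 5 / 96) := by norm_num
    _ ≤ (((cosh s - 1) / s ^ 2)⁻¹).re := one_div_add_le_re_inv_of_norm_sub_le (by norm_num) hw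
    _ = (z / (cosh s - 1)).re := by rw [inv_div, hsz]
end

section
/- For every z in the open unit disk 𝔻 with z ≠ 0, Re( z√z / (√z cosh(√z) − sinh(√z)) ) ≥ 8/5, where √z denotes the principal square root of z. -/
/-!
Put `w = √z`, so `‖w‖ ≤ 1` and `z √z = w³`. The Taylor expansions of `cosh` and `sinh` give
`3 (w cosh w - sinh w) = w³ (1 + δ)` with `‖δ‖ ≤ 1/5`, and on the disk `‖u - 1‖ ≤ r < 1` the real
part of `u⁻¹` is at least `1 / (1 + r)`. Hence the real part in question is at least `3 / (6/5) = 5/2`.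
-/

namespace Complex

theorem norm_cosh_sub_le {x : ℂ} (hx : ‖x‖ ≤ 1) :
    ‖cosh x - (1 + x ^ 2 / 2)‖ ≤ ‖x‖ ^ 4 * (5 / 96) := by
  have h := cos_bound (x := x * I) (by simpa using hx)
  rwa [cos_mul_I, mul_pow, I_sq, mul_neg_one, neg_div, sub_neg_eq_add, norm_mul, norm_I, mul_one] at h

theorem norm_sinh_sub_le {x : ℂ} (hx : ‖x‖ ≤ 1) :
    ‖sinh x - (x + x ^ 3 / 6)‖ ≤ ‖x‖ ^ 5 / 100 := by
  have h := sin_bound (x := x * I) (by simpa using hx)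
  have : sin (x * I) - (x * I - (x * I) ^ 3 / 6) = (sinh x - (x + x ^ 3 / 6)) * I := by
    rw [sin_mul_I]; linear_combination (x ^ 3 * I / 6) * I_sq
  simpa [this] using h

theorem inv_one_add_le_re_inv {u : ℂ} {r : ℝ} (hu : ‖u - 1‖ ≤ r) (hr : r < 1) :
    (1 + r)⁻¹ ≤ (u⁻¹).re := by
  have hr0 : 0 ≤ r := (norm_nonneg _).trans hu
  have hre : u.re ≤ 1 + r := by
    have := (re_le_norm (u - 1)).trans hu
    simp only [sub_re, one_re] at this
    linarith
  have hsq : (u.re - 1) ^ 2 + u.im ^ 2 ≤ r ^ 2 := by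
    have := pow_le_pow_left₀ (norm_nonneg _) hu 2
    rwa [← normSq_eq_norm_sq, normSq_apply, sub_re, sub_im, one_re, one_im, sub_zero,
      ← sq, ← sq] at this
  have hpos : 0 < normSq u := by
    rw [normSq_pos]
    rintro rfl
    rw [zero_sub, norm_neg, norm_one] at hu
    linarith
  rw [inv_re, le_div_iff₀ hpos, normSq_apply, inv_mul_le_iff₀ (by linarith)]
  -- the disk `‖u - 1‖ ≤ r` lies in the disk with diameter `[0, 1 + r]`
  nlinarith [mul_nonneg (sub_nonneg.2 hr.le) (sub_nonneg.2 hre)]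

theorem norm_three_mul_mul_cosh_sub_sinh_sub_pow_three_le {w : ℂ} (hw : ‖w‖ ≤ 1) :
    ‖3 * (w * cosh w - sinh w) - w ^ 3‖ ≤ ‖w‖ ^ 3 / 5 := by
  have hsplit : 3 * (w * cosh w - sinh w) - w ^ 3 =
      3 * w * (cosh w - (1 + w ^ 2 / 2)) - 3 * (sinh w - (w + w ^ 3 / 6)) := by ring
  have hw53 : ‖w‖ ^ 5 ≤ ‖w‖ ^ 3 := pow_le_pow_of_le_one (norm_nonneg _) hw (by norm_num)
  calc ‖3 * (w * cosh w - sinh w) - w ^ 3‖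
      ≤ 3 * ‖w‖ * ‖cosh w - (1 + w ^ 2 / 2)‖ + 3 * ‖sinh w - (w + w ^ 3 / 6)‖ := by
        rw [hsplit]
        refine (norm_sub_le _ _).trans_eq ?_
        simp only [norm_mul, norm_ofNat]
    _ ≤ 3 * ‖w‖ * (‖w‖ ^ 4 * (5 / 96)) + 3 * (‖w‖ ^ 5 / 100) := by
        gcongr
        exacts [norm_cosh_sub_le hw, norm_sinh_sub_le hw]
    _ = 149 / 800 * ‖w‖ ^ 5 := by ring
    _ ≤ ‖w‖ ^ 3 / 5 := by linarith [pow_nonneg (norm_nonneg w) 5]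

theorem re_pow_three_div_mul_cosh_sub_sinh_ge {w : ℂ} (hw0 : w ≠ 0) (hw : ‖w‖ ≤ 1) :
    5 / 2 ≤ (w ^ 3 / (w * cosh w - sinh w)).re := by
  set u := 3 * (w * cosh w - sinh w) / w ^ 3
  have hw3 : w ^ 3 ≠ 0 := pow_ne_zero 3 hw0
  have hu : ‖u - 1‖ ≤ 1 / 5 := by
    rw [show u - 1 = (3 * (w * cosh w - sinh w) - w ^ 3) / w ^ 3 by rw [sub_div, div_self hw3],
      norm_div, norm_pow, div_le_iff₀ (by positivity)]
    linarith [norm_three_mul_mul_cosh_sub_sinh_sub_pow_three_le hw]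
  have heq : w ^ 3 / (w * cosh w - sinh w) = 3 * u⁻¹ := by
    rw [inv_div, ← mul_div_assoc, mul_div_mul_left _ _ three_ne_zero]
  rw [heq, mul_re, re_ofNat, im_ofNat, zero_mul, sub_zero]
  linarith [inv_one_add_le_re_inv hu (by norm_num)]

end Complex

theorem re_div_sqrt_cosh_sub_sinh_ge (z : ℂ) (hz : ‖z‖ < 1) (hz0 : z ≠ 0) :
    (8 / 5 : ℝ) ≤
      (z * z ^ (1 / 2 : ℂ) /
        (z ^ (1 / 2 : ℂ) * Complex.cosh (z ^ (1 / 2 : ℂ)) - Complex.sinh (z ^ (1 / 2 : ℂ)))).re := by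
  set w := z ^ (1 / 2 : ℂ)
  have hwz : w ^ 2 = z := by simp only [w, one_div, Complex.cpow_ofNat_inv_pow]
  have hw0 : w ≠ 0 := by rintro hw; simp [← hwz, hw] at hz0
  have hw : ‖w‖ ≤ 1 :=
    ((pow_lt_one_iff_of_nonneg (norm_nonneg w) two_ne_zero).1 (by rwa [← norm_pow, hwz])).le
  rw [show z * w = w ^ 3 by rw [← hwz]; ring]
  linarith [Complex.re_pow_three_div_mul_cosh_sub_sinh_ge hw0 hw]
end

section
/- Let α ≥ 1 and β ≥ (3+√17)/2 be real numbers. Then for every z in the open unit disk 𝔻, Re( 𝔼'_{α,β}(z) ) > 0, where 𝔼'_{α,β}(z) = 1 + Σ_{n=1}^∞ (n+1) (Γ(β)/Γ(αn+β)) z^{n}. -/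
/-!
The coefficients `c n = (n + 2) Γ(β) / Γ(α (n + 1) + β)` of `𝔼'_{α,β} - 1` decay geometrically.
Since `Γ` is increasing on `[2, ∞)`, it suffices to treat `α = 1`; there the functional equation
`Γ(s + 1) = s Γ(s)` gives `c (n + 1) / c n = (n + 3) / ((n + 2) (n + 1 + β)) ≤ 1 / 3` for `β ≥ 7 / 2`,
and `c 0 = 2 / β`. Hence `|𝔼'_{α,β}(z) - 1| ≤ |z| (2 / β) (3 / 2) < 1` on the unit disk, which forces
a positive real part.
-/

/-- The derivative of the normalized Mittag-Leffler function
`𝔼'_{α,β}(z) = 1 + ∑_{n=1}^∞ (n+1) (Γ(β)/Γ(αn+β)) z^{n}`. -/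
noncomputable def normalizedMittagLefflerDeriv (α β : ℝ) (z : ℂ) : ℂ :=
  1 + ∑' n : ℕ, ((n : ℂ) + 2) * ((Real.Gamma β / Real.Gamma (α * (n + 1) + β) : ℝ) : ℂ)
      * z ^ (n + 1)

noncomputable def mittagLefflerDerivCoeff (α β : ℝ) (n : ℕ) : ℝ :=
  (n + 2) * (Real.Gamma β / Real.Gamma (α * (n + 1) + β))

lemma normalizedMittagLefflerDeriv_eq (α β : ℝ) (z : ℂ) :
    normalizedMittagLefflerDeriv α β z =
      1 + ∑' n : ℕ, (mittagLefflerDerivCoeff α β n : ℂ) * z ^ (n + 1) := by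
  simp [normalizedMittagLefflerDeriv, mittagLefflerDerivCoeff]

section Coeff

variable {α β : ℝ}

lemma mittagLefflerDerivCoeff_nonneg (hα : 0 ≤ α) (hβ : 0 < β) (n : ℕ) :
    0 ≤ mittagLefflerDerivCoeff α β n := by
  unfold mittagLefflerDerivCoeff
  positivity

lemma mittagLefflerDerivCoeff_le_coeff_one (hα : 1 ≤ α) (hβ : 1 ≤ β) (n : ℕ) :
    mittagLefflerDerivCoeff α β n ≤ mittagLefflerDerivCoeff 1 β n := by
  unfold mittagLefflerDerivCoeff
  have hn : (0 : ℝ) ≤ n := n.cast_nonneg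
  refine mul_le_mul_of_nonneg_left ?_ (by positivity)
  refine div_le_div_of_nonneg_left (Real.Gamma_pos_of_pos (by positivity)).le
    (Real.Gamma_pos_of_pos (by positivity)) (Real.Gamma_strictMonoOn_Ici.monotoneOn ?_ ?_ ?_)
  · simp only [Set.mem_Ici]; linarith
  · simp only [Set.mem_Ici]; nlinarith
  · nlinarith

lemma mittagLefflerDerivCoeff_one_zero (hβ : 0 < β) :
    mittagLefflerDerivCoeff 1 β 0 = 2 / β := by
  have hΓ : Real.Gamma β ≠ 0 := (Real.Gamma_pos_of_pos hβ).ne'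
  simp only [mittagLefflerDerivCoeff, Nat.cast_zero, zero_add, one_mul]
  rw [add_comm, Real.Gamma_add_one hβ.ne']
  field_simp

lemma mittagLefflerDerivCoeff_one_succ_le (hβ : 7 / 2 ≤ β) (n : ℕ) :
    mittagLefflerDerivCoeff 1 β (n + 1) ≤ mittagLefflerDerivCoeff 1 β n / 3 := by
  have hn : (0 : ℝ) ≤ n := n.cast_nonneg
  have hs : (0 : ℝ) < n + 1 + β := by linarith
  have hΓ : 0 < Real.Gamma (n + 1 + β) := Real.Gamma_pos_of_pos hs
  have hΓβ : 0 < Real.Gamma β := Real.Gamma_pos_of_pos (by linarith)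
  simp only [mittagLefflerDerivCoeff, one_mul, Nat.cast_succ]
  rw [show (n : ℝ) + 1 + 1 + β = (n + 1 + β) + 1 by ring, Real.Gamma_add_one hs.ne']
  rw [le_div_iff₀ three_pos]
  field_simp
  nlinarith

lemma mittagLefflerDerivCoeff_le_geometric (hα : 1 ≤ α) (hβ : 7 / 2 ≤ β) (n : ℕ) :
    mittagLefflerDerivCoeff α β n ≤ 2 / β * (1 / 3) ^ n := by
  refine (mittagLefflerDerivCoeff_le_coeff_one hα (by linarith) n).trans ?_
  induction n with
  | zero => rw [mittagLefflerDerivCoeff_one_zero (by linarith), pow_zero, mul_one]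
  | succ n ih =>
    calc mittagLefflerDerivCoeff 1 β (n + 1) ≤ mittagLefflerDerivCoeff 1 β n / 3 :=
          mittagLefflerDerivCoeff_one_succ_le hβ n
      _ ≤ 2 / β * (1 / 3) ^ n / 3 := by gcongr
      _ = 2 / β * (1 / 3) ^ (n + 1) := by ring

end Coeff

lemma norm_tsum_mul_pow_succ_lt_one {R : Type*} [SeminormedRing R] {c : ℕ → R} {C q : ℝ}
    (hc : ∀ n, ‖c n‖ ≤ C * q ^ n) (hq₀ : 0 ≤ q) (hq₁ : q < 1) (hC : C ≤ 1 - q)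
    {z : R} (hz : ‖z‖ < 1) :
    ‖∑' n, c n * z ^ (n + 1)‖ < 1 := by
  have hC₀ : 0 ≤ C := by simpa using (norm_nonneg _).trans (hc 0)
  have hterm : ∀ n, ‖c n * z ^ (n + 1)‖ ≤ ‖z‖ * (C * q ^ n) := fun n =>
    calc ‖c n * z ^ (n + 1)‖ ≤ ‖c n‖ * ‖z‖ ^ (n + 1) :=
          (norm_mul_le _ _).trans (by gcongr; exact norm_pow_le' _ n.succ_pos)
      _ ≤ C * q ^ n * ‖z‖ := by
          gcongr
          exacts [hc n, pow_le_of_le_one (norm_nonneg z) hz.le n.succ_ne_zero]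
      _ = ‖z‖ * (C * q ^ n) := mul_comm _ _
  have hgeom : Summable fun n => ‖z‖ * (C * q ^ n) :=
    ((summable_geometric_of_lt_one hq₀ hq₁).mul_left C).mul_left ‖z‖
  calc ‖∑' n, c n * z ^ (n + 1)‖
      ≤ ∑' n, ‖z‖ * (C * q ^ n) :=
        tsum_of_norm_bounded hgeom.hasSum hterm
    _ = ‖z‖ * (C / (1 - q)) := by
        rw [tsum_mul_left, tsum_mul_left, tsum_geometric_of_lt_one hq₀ hq₁, div_eq_mul_inv]
    _ ≤ ‖z‖ * 1 := by gcongr; rwa [div_le_one (by linarith)]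
    _ < 1 := by rwa [mul_one]

theorem re_deriv_mittagLeffler_pos (α β : ℝ) (hα : 1 ≤ α)
    (hβ : (3 + Real.sqrt 17) / 2 ≤ β) (z : ℂ) (hz : ‖z‖ < 1) :
    0 < (normalizedMittagLefflerDeriv α β z).re := by
  have hβ' : 7 / 2 ≤ β := by
    have : 4 ≤ √17 := Real.le_sqrt_of_sq_le (by norm_num)
    linarith
  have hcoeff : ∀ n, ‖(mittagLefflerDerivCoeff α β n : ℂ)‖ ≤ 2 / β * (1 / 3) ^ n := fun n => by
    rw [Complex.norm_real, Real.norm_of_nonneg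
      (mittagLefflerDerivCoeff_nonneg (by linarith) (by linarith) n)]
    exact mittagLefflerDerivCoeff_le_geometric hα hβ' n
  have hsmall := norm_tsum_mul_pow_succ_lt_one hcoeff (by norm_num) (by norm_num)
    (by rw [div_le_iff₀ (by linarith)]; linarith) hz
  rw [normalizedMittagLefflerDeriv_eq, Complex.add_re, Complex.one_re]
  linarith [(abs_lt.1 ((Complex.abs_re_le_norm _).trans_lt hsmall)).1]
end
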